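/- Let p be a real number and define x_1 = • and, for n ≥ 1, x_{n+1} = Σ_{k=1}^{n} binom(p,k) Σ_{n_1+⋯+n_k=n, n_i≥1} B_+(x_{n_1}x_{n_2}⋯x_{n_k}) in the Connes–Kreimer Hopf algebra H_K, where B_+ is extended linearly to forests. Then this solution of the combinatorial Dyson–Schwinger equation X = 1 + B_+(X^p) in H_K is given explicitly by x_n = Σ_{t : |t| = n} e(t)·C_p(t)·t, the sum over all rooted trees with n vertices, where e(t) is the number of planar rooted trees whose underlying rooted tree is t; equivalently, the coefficient of t in x_n is (1/|Sym(t)|)·∏_{v∈V̄(t)} c(v)!·binom(p, c(v)). -/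

import Mathlib

/-! ### Planar rooted trees -/

/-- A planar rooted tree: a root with an ordered list of branches.
`PTree.node [T₁,…,T_k]` is `B₊(T₁⋯T_k)`; `PTree.node []` is the one-vertex tree `•`. -/
inductive PTree : Type where
  | node : List PTree → PTree

instance : Inhabited PTree := ⟨.node []⟩

noncomputable instance : DecidableEq PTree := Classical.decEq _

/-- Number of vertices of a planar rooted tree. -/
def PTree.size : PTree → ℕ
  | .node l => 1 + (l.attach.map (fun x => PTree.size x.1)).sum
decreasing_by
  have h := List.sizeOf_lt_of_mem x.2
  simp only [PTree.node.sizeOf_spec]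
  omega

/-! ### Rooted trees -/

/-- Isomorphism of the underlying rooted trees: the lists of branches agree
up to permutation and recursive isomorphism. -/
inductive PTree.Equiv : PTree → PTree → Prop where
  | node {l m m' : List PTree} :
      List.Forall₂ PTree.Equiv l m' → List.Perm m' m → PTree.Equiv (.node l) (.node m)

/-- Rooted trees: planar rooted trees modulo isomorphism. -/
def RTree : Type := Quot PTree.Equiv

/-- The underlying rooted tree of a planar rooted tree. -/
def toR : PTree → RTree := Quot.mk _

/-- A choice of planar representative of a rooted tree. -/
noncomputable def RTree.out : RTree → PTree := Quot.out

noncomputable instance : DecidableEq RTree := Classical.decEq _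

/-- The order of the symmetry group of (the underlying rooted tree of) a planar
rooted tree: `|Sym(B₊(t₁⋯t_k))| = (∏_s m_s!)·∏ᵢ |Sym(tᵢ)|`, where `m_s` is the
multiplicity of the isomorphism type `s` among the branches `t₁,…,t_k`. -/
noncomputable def PTree.symOrder : PTree → ℕ
  | .node l =>
      (l.attach.map (fun x => PTree.symOrder x.1)).prod *
      (((l.map toR : List RTree) : Multiset RTree).toFinset.prod
        (fun s => (Multiset.count s (l.map toR : Multiset RTree)).factorial))
decreasing_by
  have h := List.sizeOf_lt_of_mem x.2
  simp only [PTree.node.sizeOf_spec]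
  omega

/-- The order of the symmetry group of a rooted tree. -/
noncomputable def RTree.sym (t : RTree) : ℕ := t.out.symOrder

/-- Number of vertices of a rooted tree. -/
noncomputable def RTree.size (t : RTree) : ℕ := t.out.size

/-- `B₊` for rooted trees: attach a new root to a multiset forest. -/
noncomputable def RTree.node (m : Multiset RTree) : RTree :=
  toR (PTree.node (m.toList.map RTree.out))

/-- The one-vertex rooted tree `•`. -/
noncomputable def RTree.bullet : RTree := toR (.node [])

/-! ### Enumeration of planar trees by size -/

mutual
/-- All planar rooted trees with exactly `n` vertices. -/
def treesOfSize : ℕ → List PTree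
  | 0 => []
  | n + 1 => (forestsOfSize n).map PTree.node
  termination_by n => 2 * n
  decreasing_by omega
/-- All ordered forests of planar rooted trees with `n` vertices in total. -/
def forestsOfSize : ℕ → List (List PTree)
  | 0 => [[]]
  | n + 1 =>
      ((List.range (n + 1)).attach.map (fun j =>
        (treesOfSize (j.1 + 1)).flatMap (fun t =>
          (forestsOfSize (n - j.1)).map (t :: ·)))).flatten
  termination_by n => 2 * n + 1
  decreasing_by
  · have hj := List.mem_range.mp j.2; omega
  · have hj := List.mem_range.mp j.2; omega
end

/-- All rooted trees with exactly `n` vertices. -/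
noncomputable def allRTrees (n : ℕ) : List RTree := ((treesOfSize n).map toR).dedup

/-- `e(t)`: the number of planar rooted trees whose underlying rooted tree is `t`. -/
noncomputable def eCount (t : RTree) : ℕ :=
  ((treesOfSize t.size).filter (fun T => toR T = t)).length

/-! ### The Connes–Kreimer Hopf algebra -/

/-- The Connes–Kreimer Hopf algebra over `k`: the free commutative algebra on
rooted trees, with monomial basis the forests (multisets) of rooted trees. -/
abbrev HK (k : Type*) [CommSemiring k] := AddMonoidAlgebra k (Multiset RTree)

/-- The model for `H_K ⊗ H_K`: monomial basis consists of pairs of forests. -/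
abbrev HK2 (k : Type*) [CommSemiring k] :=
  AddMonoidAlgebra k (Multiset RTree × Multiset RTree)

/-- `B₊` on `H_K`: sends a forest to the tree obtained by attaching a new root,
extended linearly. -/
noncomputable def BplusK (k : Type*) [CommSemiring k] : HK k → HK k :=
  AddMonoidAlgebra.mapDomain (fun w => ({RTree.node w} : Multiset RTree))

/-- The tensor product map `H_K × H_K → H_K ⊗ H_K` in the pair model. -/
noncomputable def tensHK (k : Type*) [CommSemiring k] (f g : HK k) : HK2 k :=
  f.coeff.sum (fun a x => g.coeff.sum (fun b y => AddMonoidAlgebra.single (a, b) (x * y)))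

/-- The binomial coefficient `binom(p,k) = p(p−1)⋯(p−k+1)/k!` of a real number `p`. -/
noncomputable def rbinom (p : ℝ) (n : ℕ) : ℝ :=
  (∏ i ∈ Finset.range n, (p - i)) / (n.factorial : ℝ)

/-- `C_p(T) = ∏_{v ∈ V̄(T)} binom(p, c(v))`, where `c(v)` is the number of children
of `v` (vertices with no children contribute the factor `binom(p,0) = 1`). -/
noncomputable def Cp (p : ℝ) : PTree → ℝ
  | .node l => rbinom p l.length * (l.attach.map (fun x => Cp p x.1)).prod
decreasing_by
  have h := List.sizeOf_lt_of_mem x.2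
  simp only [PTree.node.sizeOf_spec]
  omega

/-- `C_p(t)` for a rooted tree. -/
noncomputable def CpR (p : ℝ) (t : RTree) : ℝ := Cp p t.out

/-- All compositions of `n` into exactly `k` positive parts. -/
def compositionsList : ℕ → ℕ → List (List ℕ)
  | n, 0 => if n = 0 then [[]] else []
  | n, k + 1 =>
      ((List.range n).map (fun i =>
        (compositionsList (n - (i + 1)) k).map ((i + 1) :: ·))).flatten

/-- The homogeneous components `x_n = Σ_{|t| = n} e(t)·C_p(t)·t` of the solution of
the combinatorial Dyson–Schwinger equation `X = 1 + B₊(X^p)` in `H_K`. -/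
noncomputable def xK (p : ℝ) (n : ℕ) : HK ℝ :=
  ((allRTrees n).map (fun t =>
    AddMonoidAlgebra.single ({t} : Multiset RTree) ((eCount t : ℝ) * CpR p t))).sum

/-- `∏_{v ∈ V̄(t)} c(v)!·binom(p, c(v))` over the vertices of a planar tree. -/
noncomputable def cfactCp (p : ℝ) : PTree → ℝ
  | .node l => ((l.length.factorial : ℝ) * rbinom p l.length)
      * (l.attach.map (fun x => cfactCp p x.1)).prod
decreasing_by
  have h := List.sizeOf_lt_of_mem x.2
  simp only [PTree.node.sizeOf_spec]
  omega

/-!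
The sum `xPlanar p n = Σ_{|T| = n} C_p(T)·T` over planar trees `T` satisfies the recursion: a planar
tree with `n + 1` vertices is `B₊` of an ordered forest of size `n`, ordered forests split by the
sizes of their trees into the compositions `n = n₁ + ⋯ + n_k`, and `binom(p, k)` is the factor of
`C_p` at the root. The recursion determines `x_n`, and grouping the planar trees by isomorphism
class turns `xPlanar p n` into `Σ_t e(t)·C_p(t)·t`.

For the coefficient, `e(t)·|Sym(t)| = ∏_v c(v)!`. If `t = B₊(t₁⋯t_k)`, then `e(t)` is the number of
ordered forests of planar trees whose underlying forest is `μ = t₁⋯t_k`; choosing the class of the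
first tree shows that this number times `∏_s m_s!` is `k!·∏ᵢ e(tᵢ)`, and the recursion for `|Sym|`
gives the identity by induction.
-/

theorem List.Forall₂.imp_of_mem {α β : Type*} {r s : α → β → Prop} {l : List α} {m : List β}
    (H : ∀ a ∈ l, ∀ b, r a b → s a b) (h : Forall₂ r l m) : Forall₂ s l m :=
  ((forall₂_and_left _ _).2 ⟨fun _ ha => ha, h⟩).imp fun a b hab => H a hab.1 b hab.2

theorem List.Forall₂.map_eq_map_of_mem {α β γ : Type*} {r : α → β → Prop} {f : α → γ} {g : β → γ}
    {l : List α} {m : List β} (H : ∀ a ∈ l, ∀ b, r a b → f a = g b) (h : Forall₂ r l m) :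
    l.map f = m.map g := by
  rw [← forall₂_eq_eq_eq, forall₂_map_left_iff, forall₂_map_right_iff]
  exact h.imp_of_mem H

theorem List.Forall₂.trans_of_mem {α β γ : Type*} {r : α → β → Prop} {s : β → γ → Prop}
    {t : α → γ → Prop} {l : List α} {m : List β} {k : List γ}
    (H : ∀ a ∈ l, ∀ b c, r a b → s b c → t a c) (h₁ : Forall₂ r l m) (h₂ : Forall₂ s m k) :
    Forall₂ t l k := by
  induction h₁ generalizing k with
  | nil => cases h₂; exact .nil
  | cons hab _ ih =>
    cases h₂ with
    | cons hbc h₂ =>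
      exact .cons (H _ (mem_cons_self ..) _ _ hab hbc)
        (ih (fun a ha => H a (mem_cons_of_mem _ ha)) h₂)

theorem List.sum_map_range {M : Type*} [AddCommMonoid M] (n : ℕ) (f : ℕ → M) :
    ((List.range n).map f).sum = ∑ j ∈ Finset.range n, f j := rfl

theorem List.sum_map_flatMap {α β M : Type*} [AddCommMonoid M] (l : List α) (f : α → List β)
    (g : β → M) : ((l.flatMap f).map g).sum = (l.map fun a => ((f a).map g).sum).sum := by
  simp [List.flatMap_def, List.sum_flatten, Function.comp_def]

theorem List.sum_map_sum_map_comm {α β M : Type*} [AddCommMonoid M] (L₁ : List α) (L₂ : List β)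
    (f : α → β → M) :
    (L₁.map fun a => (L₂.map (f a)).sum).sum = (L₂.map fun b => (L₁.map (f · b)).sum).sum := by
  simpa using Multiset.sum_map_sum_map (L₁ : Multiset α) (L₂ : Multiset β) (f := f)

theorem List.sum_map_finset_sum_comm {α β M : Type*} [AddCommMonoid M] (L : List α) (s : Finset β)
    (f : α → β → M) :
    (L.map fun a => ∑ b ∈ s, f a b).sum = ∑ b ∈ s, (L.map (f · b)).sum := by
  induction L <;> simp_all [Finset.sum_add_distrib]

theorem Multiset.prod_factorial_count_cons {α : Type*} [DecidableEq α] (a : α) (s : Multiset α) :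
    ∏ u ∈ (a ::ₘ s).toFinset, ((a ::ₘ s).count u).factorial =
      (s.count a + 1) * ∏ u ∈ s.toFinset, (s.count u).factorial := by
  have ha : a ∈ (a ::ₘ s).toFinset := by simp
  have hsub : s.toFinset ⊆ (a ::ₘ s).toFinset := Multiset.toFinset_subset.2 (s.subset_cons a)
  have hone : ∀ u ∈ (a ::ₘ s).toFinset, u ∉ s.toFinset → (s.count u).factorial = 1 :=
    fun u _ hu => by rw [Multiset.count_eq_zero.2 (by simpa using hu), Nat.factorial_zero]
  rw [Finset.prod_subset hsub hone, ← Finset.mul_prod_erase _ _ ha, ← Finset.mul_prod_erase _ _ ha,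
    Multiset.count_cons_self, Nat.factorial_succ, mul_assoc]
  congr 2
  exact Finset.prod_congr rfl fun u hu => by
    rw [Multiset.count_cons_of_ne (Finset.ne_of_mem_erase hu)]

/-! ### Isomorphism of planar trees -/

theorem PTree.ind {motive : PTree → Prop}
    (node : ∀ l : List PTree, (∀ t ∈ l, motive t) → motive (.node l)) (t : PTree) : motive t := by
  induction h : sizeOf t using Nat.strong_induction_on generalizing t with
  | _ n ih =>
    obtain ⟨l⟩ := t
    refine node l fun s hs => ih (sizeOf s) ?_ s rfl
    have := List.sizeOf_lt_of_mem hs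
    simp only [PTree.node.sizeOf_spec] at h
    omega

theorem PTree.size_node (l : List PTree) :
    PTree.size (.node l) = 1 + (l.map PTree.size).sum := by
  rw [PTree.size, List.attach_map_val]

theorem Cp_node (p : ℝ) (l : List PTree) :
    Cp p (.node l) = rbinom p l.length * (l.map (Cp p)).prod := by
  rw [Cp, List.attach_map_val]

theorem cfactCp_node (p : ℝ) (l : List PTree) :
    cfactCp p (.node l) = (l.length.factorial * rbinom p l.length) * (l.map (cfactCp p)).prod := by
  rw [cfactCp, List.attach_map_val]

theorem PTree.one_le_size (T : PTree) : 1 ≤ T.size := by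
  obtain ⟨l⟩ := T
  rw [PTree.size_node]
  omega

namespace PTree.Equiv

theorem refl (t : PTree) : PTree.Equiv t t := by
  induction t using PTree.ind with
  | node l ih => exact .node (List.forall₂_same.2 ih) (List.Perm.refl _)

theorem symm {t s : PTree} (h : PTree.Equiv t s) : PTree.Equiv s t := by
  induction t using PTree.ind generalizing s with
  | node l ih =>
    obtain ⟨hf, hp⟩ := h
    have hf' := (hf.imp_of_mem fun a ha b => ih a ha (s := b)).flip
    obtain ⟨u, hu, hpu⟩ := List.perm_comp_forall₂ hp.symm hf'
    exact .node hu hpu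

theorem trans {t s u : PTree} (h₁ : PTree.Equiv t s) (h₂ : PTree.Equiv s u) :
    PTree.Equiv t u := by
  induction t using PTree.ind generalizing s u with
  | node l ih =>
    obtain ⟨hf₁, hp₁⟩ := h₁
    obtain ⟨hf₂, hp₂⟩ := h₂
    obtain ⟨k, hk, hpk⟩ := List.perm_comp_forall₂ hp₁ hf₂
    have hf := hf₁.trans_of_mem (s := PTree.Equiv) (t := PTree.Equiv) (fun a ha _ _ => ih a ha) hk
    exact .node hf (hpk.trans hp₂)

end PTree.Equiv

theorem toR_eq_toR {t s : PTree} : toR t = toR s ↔ PTree.Equiv t s :=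
  Quot.eq.trans (Equivalence.mk PTree.Equiv.refl PTree.Equiv.symm PTree.Equiv.trans).eqvGen_iff

noncomputable def forestClass (m : List PTree) : Multiset RTree := (m.map toR : List RTree)

theorem forestClass_cons (t : PTree) (m : List PTree) :
    forestClass (t :: m) = toR t ::ₘ forestClass m := rfl

theorem PTree.symOrder_node (l : List PTree) :
    PTree.symOrder (.node l) = (l.map PTree.symOrder).prod *
      ∏ s ∈ (forestClass l).toFinset, ((forestClass l).count s).factorial := by
  rw [PTree.symOrder, List.attach_map_val]
  rfl

theorem toR_node_eq_toR_node {l m : List PTree} :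
    toR (.node l) = toR (.node m) ↔ forestClass l = forestClass m := by
  rw [toR_eq_toR, forestClass, forestClass, Multiset.coe_eq_coe]
  constructor
  · rintro ⟨hf, hp⟩
    rw [show l.map toR = _ from hf.map_eq_map_of_mem fun a _ b h => toR_eq_toR.2 h]
    exact hp.map toR
  · intro h
    -- lift the permutation of the classes to a permutation of representatives
    obtain ⟨m', hf, hp⟩ := List.perm_comp_forall₂ h
      (List.forall₂_map_left_iff.2 (List.forall₂_same.2 fun b _ => rfl) :
        List.Forall₂ (fun a b => a = toR b) (m.map toR) m)
    exact .node ((List.forall₂_map_left_iff.1 hf).imp fun a b h => toR_eq_toR.1 h) hp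

theorem toR_out (t : RTree) : toR t.out = t := Quot.out_eq t

theorem PTree.Equiv.size_eq {t s : PTree} (h : PTree.Equiv t s) : t.size = s.size := by
  induction t using PTree.ind generalizing s with
  | node l ih =>
    obtain ⟨hf, hp⟩ := h
    rw [PTree.size_node, PTree.size_node, hf.map_eq_map_of_mem fun a ha _ h => ih a ha h,
      (hp.map _).sum_eq]

theorem PTree.Equiv.Cp_eq (p : ℝ) {t s : PTree} (h : PTree.Equiv t s) : Cp p t = Cp p s := by
  induction t using PTree.ind generalizing s with
  | node l ih =>
    obtain ⟨hf, hp⟩ := h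
    rw [Cp_node, Cp_node, hf.length_eq, hp.length_eq,
      hf.map_eq_map_of_mem fun a ha _ h => ih a ha h, (hp.map _).prod_eq]

theorem RTree.size_toR (T : PTree) : (toR T).size = T.size :=
  (toR_eq_toR.1 (toR_out (toR T))).size_eq

theorem RTree.one_le_size (t : RTree) : 1 ≤ t.size := t.out.one_le_size

theorem CpR_toR (p : ℝ) (T : PTree) : CpR p (toR T) = Cp p T :=
  (toR_eq_toR.1 (toR_out (toR T))).Cp_eq p

theorem RTree.node_forestClass (l : List PTree) : RTree.node (forestClass l) = toR (.node l) := by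
  rw [RTree.node, toR_node_eq_toR_node, forestClass, List.map_map, Function.comp_def]
  simp only [toR_out, List.map_id', Multiset.coe_toList]

theorem forestsOfSize_succ (n : ℕ) : forestsOfSize (n + 1) =
    (List.range (n + 1)).flatMap fun j =>
      (treesOfSize (j + 1)).flatMap fun t => (forestsOfSize (n - j)).map (t :: ·) := by
  rw [forestsOfSize, List.attach_map_val (f := fun j => (treesOfSize (j + 1)).flatMap fun t =>
    (forestsOfSize (n - j)).map (t :: ·)), List.flatMap_def]

theorem sum_size_of_mem_forestsOfSize {n : ℕ} {m : List PTree} (h : m ∈ forestsOfSize n) :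
    (m.map PTree.size).sum = n := by
  induction n using Nat.strong_induction_on generalizing m with
  | _ n ih =>
    cases n with
    | zero => simp_all [forestsOfSize]
    | succ n =>
      simp only [forestsOfSize_succ, treesOfSize, List.mem_flatMap, List.mem_map,
        List.mem_range] at h
      obtain ⟨j, hj, _, ⟨l, hl, rfl⟩, rest, hrest, rfl⟩ := h
      rw [List.map_cons, List.sum_cons, PTree.size_node, ih j (by omega) hl,
        ih (n - j) (by omega) hrest]
      omega

theorem size_of_mem_treesOfSize {n : ℕ} {T : PTree} (h : T ∈ treesOfSize n) : T.size = n := by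
  cases n with
  | zero => simp [treesOfSize] at h
  | succ n =>
    rw [treesOfSize] at h
    obtain ⟨m, hm, rfl⟩ := List.mem_map.1 h
    rw [PTree.size_node, sum_size_of_mem_forestsOfSize hm]
    omega

/-! ### Counting planar representatives -/

noncomputable def forestSize (μ : Multiset RTree) : ℕ := (μ.map RTree.size).sum

noncomputable def forestCount (μ : Multiset RTree) : ℕ :=
  (forestsOfSize (forestSize μ)).countP fun m => forestClass m = μ

theorem forestSize_forestClass (m : List PTree) :
    forestSize (forestClass m) = (m.map PTree.size).sum := by
  simp [forestSize, forestClass, Function.comp_def, RTree.size_toR]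

theorem forestSize_eq_size_add_erase {μ : Multiset RTree} {s : RTree} (h : s ∈ μ) :
    forestSize μ = s.size + forestSize (μ.erase s) := by
  conv_lhs => rw [← Multiset.cons_erase h]
  rw [forestSize, forestSize, Multiset.map_cons, Multiset.sum_cons]

theorem countP_toR_treesOfSize (s : RTree) (j : ℕ) :
    (treesOfSize j).countP (fun T => toR T = s) = if s.size = j then eCount s else 0 := by
  split_ifs with h
  · rw [eCount, h, List.countP_eq_length_filter]
  · refine List.countP_eq_zero.2 fun T hT hTs => h ?_
    rw [← of_decide_eq_true hTs, RTree.size_toR, size_of_mem_treesOfSize hT]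

theorem sum_countP_toR_treesOfSize {s : RTree} {n : ℕ} (h : s.size ≤ n + 1) :
    ∑ j ∈ Finset.range (n + 1), (treesOfSize (j + 1)).countP (fun T => toR T = s) = eCount s := by
  have := s.one_le_size
  simp only [countP_toR_treesOfSize]
  rw [Finset.sum_eq_single_of_mem (s.size - 1) (Finset.mem_range.2 (by omega))
    fun j _ hj => if_neg (by omega), if_pos (by omega)]

theorem eCount_toR_node (l : List PTree) :
    eCount (toR (.node l)) = forestCount (forestClass l) := by
  rw [eCount, ← List.countP_eq_length_filter, RTree.size_toR, PTree.size_node, add_comm,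
    ← forestSize_forestClass, treesOfSize, List.countP_map, forestCount]
  simp only [Function.comp_def, toR_node_eq_toR_node, eq_comm]

theorem countP_forestClass_cons {μ : Multiset RTree} {t : PTree} {n : ℕ}
    (hn : forestSize μ = t.size + n) :
    (forestsOfSize n).countP (fun m => forestClass (t :: m) = μ) =
      if toR t ∈ μ then forestCount (μ.erase (toR t)) else 0 := by
  split_ifs with ht
  · rw [forestSize_eq_size_add_erase ht, RTree.size_toR, Nat.add_left_cancel_iff] at hn
    rw [forestCount, ← hn]
    refine List.countP_congr fun m _ => ?_
    rw [decide_eq_true_iff, decide_eq_true_iff, forestClass_cons]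
    exact ⟨fun h => h ▸ (Multiset.erase_cons_head _ _).symm, fun h => h ▸ Multiset.cons_erase ht⟩
  · refine List.countP_eq_zero.2 fun m _ hm => ht ?_
    rw [← of_decide_eq_true hm, forestClass_cons]
    exact Multiset.mem_cons_self _ _

theorem forestCount_eq_sum {μ : Multiset RTree} (hμ : μ ≠ 0) :
    forestCount μ = ∑ s ∈ μ.toFinset, eCount s * forestCount (μ.erase s) := by
  obtain ⟨s₀, hs₀⟩ := Multiset.exists_mem_of_ne_zero hμ
  obtain ⟨n, hn⟩ : ∃ n, forestSize μ = n + 1 := ⟨forestSize μ - 1, by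
    have := forestSize_eq_size_add_erase hs₀
    have := s₀.one_le_size
    omega⟩
  have hhead : ∀ j ∈ Finset.range (n + 1), ∀ t ∈ treesOfSize (j + 1),
      (forestsOfSize (n - j)).countP (fun m => forestClass (t :: m) = μ) =
        ∑ s ∈ μ.toFinset, if toR t = s then forestCount (μ.erase s) else 0 := by
    intro j hj t ht
    have := Finset.mem_range.1 hj
    rw [Finset.sum_ite_eq, countP_forestClass_cons (n := n - j)
      (by rw [hn, size_of_mem_treesOfSize ht]; omega)]
    simp only [Multiset.mem_toFinset]
  calc forestCount μ
      = ∑ j ∈ Finset.range (n + 1), ((treesOfSize (j + 1)).map fun t =>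
          (forestsOfSize (n - j)).countP (fun m => forestClass (t :: m) = μ)).sum := by
        simp only [forestCount, hn, forestsOfSize_succ, List.countP_flatMap, List.countP_map,
          Function.comp_def]
        rfl
    _ = ∑ s ∈ μ.toFinset, ∑ j ∈ Finset.range (n + 1),
          (treesOfSize (j + 1)).countP (fun T => toR T = s) * forestCount (μ.erase s) := by
        rw [Finset.sum_comm]
        refine Finset.sum_congr rfl fun j hj => ?_
        rw [List.map_congr_left (hhead j hj), List.sum_map_finset_sum_comm]
        simp [List.sum_map_ite, List.countP_eq_length_filter]
    _ = ∑ s ∈ μ.toFinset, eCount s * forestCount (μ.erase s) := by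
        refine Finset.sum_congr rfl fun s hs => ?_
        have := forestSize_eq_size_add_erase (Multiset.mem_toFinset.1 hs)
        rw [← Finset.sum_mul, sum_countP_toR_treesOfSize (by omega)]

theorem forestCount_zero : forestCount 0 = 1 := by
  simp [forestCount, forestSize, forestsOfSize, forestClass]

theorem forestCount_mul_prod_factorial_count (μ : Multiset RTree) :
    forestCount μ * ∏ s ∈ μ.toFinset, (μ.count s).factorial =
      (Multiset.card μ).factorial * (μ.map eCount).prod := by
  induction μ using Multiset.strongInductionOn with
  | _ μ ih =>
    rcases eq_or_ne μ 0 with rfl | hμ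
    · simp [forestCount_zero]
    have hterm : ∀ s ∈ μ.toFinset,
        eCount s * forestCount (μ.erase s) * ∏ u ∈ μ.toFinset, (μ.count u).factorial =
          μ.count s * ((Multiset.card μ - 1).factorial * (μ.map eCount).prod) := by
      intro s hs
      obtain ⟨ν, rfl⟩ := Multiset.exists_cons_of_mem (Multiset.mem_toFinset.1 hs)
      have hν := ih ν (Multiset.lt_cons_self ν s)
      rw [Multiset.erase_cons_head, Multiset.prod_factorial_count_cons, Multiset.count_cons_self,
        Multiset.card_cons, Nat.add_sub_cancel, Multiset.map_cons, Multiset.prod_cons]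
      calc _ = (ν.count s + 1) * eCount s *
            (forestCount ν * ∏ u ∈ ν.toFinset, (ν.count u).factorial) := by ring
        _ = _ := by rw [hν]; ring
    rw [forestCount_eq_sum hμ, Finset.sum_mul, Finset.sum_congr rfl hterm, ← Finset.sum_mul,
      Multiset.toFinset_sum_count_eq, ← mul_assoc,
      Nat.mul_factorial_pred (Multiset.card_pos.2 hμ).ne']

def cfact : PTree → ℕ
  | .node l => l.length.factorial * (l.map fun t => cfact t).prod

theorem PTree.symOrder_pos (T : PTree) : 0 < T.symOrder := by
  induction T using PTree.ind with
  | node l ih =>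
    rw [PTree.symOrder_node]
    exact Nat.mul_pos (List.prod_pos (by simpa using ih))
      (Finset.prod_pos fun _ _ => Nat.factorial_pos _)

theorem eCount_mul_symOrder (T : PTree) : eCount (toR T) * T.symOrder = cfact T := by
  induction T using PTree.ind with
  | node l ih =>
    have hcard : Multiset.card (forestClass l) = l.length := by simp [forestClass]
    have hprod : ((forestClass l).map eCount).prod = (l.map fun T => eCount (toR T)).prod := by
      simp [forestClass, Function.comp_def]
    rw [eCount_toR_node, PTree.symOrder_node, cfact, ← List.map_congr_left ih, List.prod_map_mul,
      mul_left_comm, forestCount_mul_prod_factorial_count, hcard, hprod]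
    ring

theorem cfactCp_eq_cfact_mul_Cp (p : ℝ) (T : PTree) : cfactCp p T = cfact T * Cp p T := by
  induction T using PTree.ind with
  | node l ih =>
    rw [cfactCp_node, cfact, Cp_node, List.map_congr_left ih, List.prod_map_mul]
    push_cast [Nat.cast_list_prod, List.map_map, Function.comp_def]
    ring

theorem eCount_mul_CpR (p : ℝ) (t : RTree) :
    (eCount t : ℝ) * CpR p t = (t.sym : ℝ)⁻¹ * cfactCp p t.out := by
  have hsym : (t.out.symOrder : ℝ) ≠ 0 := Nat.cast_ne_zero.2 t.out.symOrder_pos.ne'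
  rw [RTree.sym, cfactCp_eq_cfact_mul_Cp, ← eCount_mul_symOrder, toR_out, CpR, Nat.cast_mul]
  field_simp

/-! ### The recursion over planar trees -/

theorem of_mem_compositionsList {n k : ℕ} {c : List ℕ} (h : c ∈ compositionsList n k) :
    c.length = k ∧ c.sum = n ∧ ∀ a ∈ c, 0 < a := by
  induction k generalizing n c with
  | zero =>
    rw [compositionsList] at h
    split_ifs at h with hn <;> simp_all
  | succ k ih =>
    rw [compositionsList, List.mem_flatten] at h
    obtain ⟨_, hL, hc⟩ := h
    obtain ⟨i, hi, rfl⟩ := List.mem_map.1 hL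
    obtain ⟨c', hc', rfl⟩ := List.mem_map.1 hc
    obtain ⟨hlen, hsum, hpos⟩ := ih hc'
    have := List.mem_range.1 hi
    refine ⟨by simp [hlen], by simp [hsum]; omega, by simpa using hpos⟩

theorem compositionsList_eq_nil_of_lt {n k : ℕ} (h : n < k) : compositionsList n k = [] :=
  List.eq_nil_iff_forall_not_mem.2 fun c hc => by
    obtain ⟨hlen, hsum, hpos⟩ := of_mem_compositionsList hc
    have := List.length_le_sum_of_one_le c hpos
    omega

theorem compositionsList_zero {n : ℕ} (h : n ≠ 0) : compositionsList n 0 = [] := by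
  rw [compositionsList, if_neg h]

theorem compositionsList_succ_succ (n k : ℕ) : compositionsList (n + 1) (k + 1) =
    (List.range (n + 1)).flatMap fun i => (compositionsList (n - i) k).map ((i + 1) :: ·) := by
  simp only [compositionsList, List.flatMap_def, Nat.add_sub_add_right]

def forestsOfComp : List ℕ → List (List PTree)
  | [] => [[]]
  | c :: cs => (treesOfSize c).flatMap fun t => (forestsOfComp cs).map (t :: ·)

theorem length_of_mem_forestsOfComp {c : List ℕ} {m : List PTree} (h : m ∈ forestsOfComp c) :
    m.length = c.length := by
  induction c generalizing m with
  | nil => simp_all [forestsOfComp]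
  | cons a c ih =>
    simp only [forestsOfComp, List.mem_flatMap, List.mem_map] at h
    obtain ⟨t, -, m, hm, rfl⟩ := h
    simp [ih hm]

theorem sum_forestsOfComp_cons {M : Type*} [AddCommMonoid M] (a : ℕ) (c : List ℕ)
    (g : List PTree → M) :
    ((forestsOfComp (a :: c)).map g).sum =
      ((treesOfSize a).map fun t => ((forestsOfComp c).map fun m => g (t :: m)).sum).sum := by
  simp [forestsOfComp, List.sum_map_flatMap, Function.comp_def]

theorem sum_forestsOfSize_eq_sum_compositions {M : Type*} [AddCommMonoid M] (n : ℕ)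
    (g : List PTree → M) :
    ((forestsOfSize n).map g).sum = ∑ k ∈ Finset.range (n + 1),
      ((compositionsList n k).map fun c => ((forestsOfComp c).map g).sum).sum := by
  induction n using Nat.strong_induction_on generalizing g with
  | _ n ih =>
    cases n with
    | zero => simp [forestsOfSize, compositionsList, forestsOfComp]
    | succ n =>
      have hsplit : ∀ j ∈ Finset.range (n + 1), ∀ t : PTree,
          ((forestsOfSize (n - j)).map fun m => g (t :: m)).sum =
            ∑ k ∈ Finset.range (n + 1), ((compositionsList (n - j) k).map fun c =>
              ((forestsOfComp c).map fun m => g (t :: m)).sum).sum := by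
        intro j hj t
        have := Finset.mem_range.1 hj
        rw [ih (n - j) (by omega)]
        refine Finset.sum_subset (Finset.range_mono (by omega)) fun k hk hk' => ?_
        simp only [Finset.mem_range, not_lt] at hk hk'
        rw [compositionsList_eq_nil_of_lt (by omega), List.map_nil, List.sum_nil]
      rw [Finset.sum_range_succ', compositionsList_zero n.succ_ne_zero, List.map_nil,
        List.sum_nil, add_zero, forestsOfSize_succ, List.sum_map_flatMap, List.sum_map_range]
      simp only [compositionsList_succ_succ, List.sum_map_flatMap, List.map_map, Function.comp_def,
        sum_forestsOfComp_cons, List.sum_map_range]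
      rw [Finset.sum_comm]
      refine Finset.sum_congr rfl fun j hj => ?_
      rw [List.map_congr_left fun t _ => hsplit j hj t, List.sum_map_finset_sum_comm]
      exact Finset.sum_congr rfl fun k _ => List.sum_map_sum_map_comm _ _ _

theorem BplusK_eq_mapDomainLinearMap (k : Type*) [CommSemiring k] :
    BplusK k = AddMonoidAlgebra.mapDomainLinearMap k k fun w => {RTree.node w} := rfl

noncomputable def xPlanar (p : ℝ) (n : ℕ) : HK ℝ :=
  ((treesOfSize n).map fun T => AddMonoidAlgebra.single {toR T} (Cp p T)).sum

theorem prod_xPlanar (p : ℝ) (c : List ℕ) :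
    (c.map (xPlanar p)).prod = ((forestsOfComp c).map fun m =>
      AddMonoidAlgebra.single (forestClass m) (m.map (Cp p)).prod).sum := by
  induction c with
  | nil => simp [forestsOfComp, forestClass, AddMonoidAlgebra.one_def]
  | cons a c ih =>
    rw [List.map_cons, List.prod_cons, ih, xPlanar, sum_forestsOfComp_cons,
      ← List.sum_map_mul_right]
    refine congrArg _ (List.map_congr_left fun t _ => ?_)
    rw [← List.sum_map_mul_left]
    refine congrArg _ (List.map_congr_left fun m _ => ?_)
    rw [AddMonoidAlgebra.single_mul_single]
    rfl

theorem xPlanar_one (p : ℝ) : xPlanar p 1 = AddMonoidAlgebra.single {RTree.bullet} 1 := by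
  simp [xPlanar, treesOfSize, forestsOfSize, Cp_node, rbinom, RTree.bullet]

theorem xPlanar_succ (p : ℝ) {n : ℕ} (hn : 1 ≤ n) :
    xPlanar p (n + 1) = ∑ k ∈ Finset.Icc 1 n, rbinom p k •
      BplusK ℝ (((compositionsList n k).map fun c => (c.map (xPlanar p)).prod).sum) := by
  have hnode : ∀ m : List PTree, AddMonoidAlgebra.single {toR (.node m)} (Cp p (.node m)) =
      rbinom p m.length •
        BplusK ℝ (AddMonoidAlgebra.single (forestClass m) (m.map (Cp p)).prod) := by
    intro m
    rw [BplusK_eq_mapDomainLinearMap, AddMonoidAlgebra.mapDomainLinearMap_single,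
      RTree.node_forestClass, AddMonoidAlgebra.smul_single, Cp_node, smul_eq_mul]
  rw [xPlanar, treesOfSize, List.map_map, Function.comp_def, List.map_congr_left fun m _ => hnode m,
    sum_forestsOfSize_eq_sum_compositions, Finset.range_eq_Ico,
    Finset.sum_eq_sum_Ico_succ_bot (by omega), compositionsList_zero (by omega), List.map_nil,
    List.sum_nil, zero_add, zero_add, Finset.Ico_add_one_right_eq_Icc]
  refine Finset.sum_congr rfl fun k _ => ?_
  simp only [prod_xPlanar, BplusK_eq_mapDomainLinearMap, map_list_sum, List.smul_sum, List.map_map,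
    Function.comp_def]
  refine congrArg _ (List.map_congr_left fun c hc => ?_)
  refine congrArg _ (List.map_congr_left fun m hm => ?_)
  rw [length_of_mem_forestsOfComp hm, (of_mem_compositionsList hc).1]

def IsDysonSchwingerSolution (p : ℝ) (x : ℕ → HK ℝ) : Prop :=
  x 1 = AddMonoidAlgebra.single {RTree.bullet} 1 ∧
    ∀ n, 1 ≤ n → x (n + 1) = ∑ k ∈ Finset.Icc 1 n, rbinom p k •
      BplusK ℝ (((compositionsList n k).map fun c => (c.map x).prod).sum)

theorem isDysonSchwingerSolution_xPlanar (p : ℝ) : IsDysonSchwingerSolution p (xPlanar p) :=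
  ⟨xPlanar_one p, fun _ => xPlanar_succ p⟩

theorem IsDysonSchwingerSolution.eq {p : ℝ} {x y : ℕ → HK ℝ} (hx : IsDysonSchwingerSolution p x)
    (hy : IsDysonSchwingerSolution p y) {n : ℕ} (hn : 1 ≤ n) : x n = y n := by
  induction n using Nat.strong_induction_on with
  | _ n ih =>
    obtain _ | _ | n := n
    · omega
    · exact hx.1.trans hy.1.symm
    rw [hx.2 (n + 1) (by omega), hy.2 (n + 1) (by omega)]
    refine Finset.sum_congr rfl fun k _ => ?_
    congr 3
    refine List.map_congr_left fun c hc => ?_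
    obtain ⟨-, hsum, hpos⟩ := of_mem_compositionsList hc
    congr 1
    refine List.map_congr_left fun a ha => ih a ?_ (hpos a ha)
    have := List.le_sum_of_mem ha
    omega

theorem count_map_toR_treesOfSize (t : RTree) (n : ℕ) :
    ((treesOfSize n).map toR).count t = if t.size = n then eCount t else 0 := by
  rw [← countP_toR_treesOfSize, List.count_eq_countP, List.countP_map]
  rfl

theorem xK_eq_xPlanar (p : ℝ) (n : ℕ) : xK p n = xPlanar p n := by
  set L := (treesOfSize n).map toR
  have hcount : ∀ t ∈ L.toFinset, eCount t = L.count t := by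
    intro t ht
    obtain ⟨T, hT, rfl⟩ := List.mem_map.1 (List.mem_toFinset.1 ht)
    rw [count_map_toR_treesOfSize, if_pos (by rw [RTree.size_toR, size_of_mem_treesOfSize hT])]
  calc xK p n = ∑ t ∈ L.toFinset, AddMonoidAlgebra.single {t} (eCount t * CpR p t) := rfl
    _ = ∑ t ∈ L.toFinset, L.count t • AddMonoidAlgebra.single {t} (CpR p t) :=
        Finset.sum_congr rfl fun t ht => by
          rw [hcount t ht, AddMonoidAlgebra.smul_single, nsmul_eq_mul]
    _ = (L.map fun t => AddMonoidAlgebra.single {t} (CpR p t)).sum :=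
        (Finset.sum_list_map_count _ _).symm
    _ = xPlanar p n := by simp [L, xPlanar, CpR_toR, Function.comp_def]

/-- The solution of the combinatorial Dyson–Schwinger equation
`X = 1 + B₊(X^p)` in the Connes–Kreimer Hopf algebra, given by `x₁ = •` and
`x_{n+1} = Σ_{k=1}^n binom(p,k) Σ_{n₁+⋯+n_k=n} B₊(x_{n₁}⋯x_{n_k})`, is
`x_n = Σ_{|t|=n} e(t)·C_p(t)·t`; equivalently, the coefficient of `t` in `x_n`
is `(1/|Sym(t)|)·∏_{v∈V̄(t)} c(v)!·binom(p, c(v))`. -/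
theorem dyson_schwinger_solution_HK (p : ℝ) (x : ℕ → HK ℝ)
    (h1 : x 1 = AddMonoidAlgebra.single ({RTree.bullet} : Multiset RTree) 1)
    (hrec : ∀ n, 1 ≤ n →
      x (n + 1) = ∑ k ∈ Finset.Icc 1 n, rbinom p k •
        BplusK ℝ (((compositionsList n k).map (fun comp => (comp.map x).prod)).sum)) :
    (∀ n, 1 ≤ n → x n = xK p n) ∧
    (∀ t : RTree, (eCount t : ℝ) * CpR p t = ((RTree.sym t : ℝ))⁻¹ * cfactCp p t.out) := by
  have hx : IsDysonSchwingerSolution p x := ⟨h1, hrec⟩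
  exact ⟨fun n hn => (hx.eq (isDysonSchwingerSolution_xPlanar p) hn).trans (xK_eq_xPlanar p n).symm,
    eCount_mul_CpR p⟩
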